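/- arXiv:2305.19277 — 2 statements merged into one kernel-verified Lean document; each statement's English description precedes it below -/
import Mathlib

section
/- Let G be a starlike graph with clique partition (V_0, V_1, …, V_t) and let S ⊆ V(G). Then every vertex v ∈ ⟨S⟩ − S belongs to C'_0, and v is an internal vertex of an induced (u,u')-path of G such that u ∈ S ∩ Z ∩ N(v) and u' ∈ ⟨S⟩. -/
open SimpleGraph

variable {V : Type*}

/-- The closed neighborhood of a vertex. -/
def closedNbhd (G : SimpleGraph V) (v : V) : Set V := insert v (G.neighborSet v)

/-- A vertex is simplicial if its closed neighborhood induces a complete graph. -/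
def IsSimplicial (G : SimpleGraph V) (v : V) : Prop :=
  ∀ a ∈ closedNbhd G v, ∀ b ∈ closedNbhd G v, a ≠ b → G.Adj a b

/-- `Z`, the set of simplicial vertices of `G`. -/
def simplicialSet (G : SimpleGraph V) : Set V := {v | IsSimplicial G v}

/-- `N(T)`, the union of open neighborhoods of vertices of `T`. -/
def nbhdSet (G : SimpleGraph V) (T : Set V) : Set V := ⋃ v ∈ T, G.neighborSet v

/-- An independent set of vertices. -/
def IsIndepSet' (G : SimpleGraph V) (T : Set V) : Prop :=
  ∀ u ∈ T, ∀ v ∈ T, ¬ G.Adj u v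

/-- The difference `d(T) = |T| - |N(T)|` of a set of vertices. -/
noncomputable def indepDiff (G : SimpleGraph V) (T : Set V) : ℤ :=
  (T.ncard : ℤ) - ((nbhdSet G T).ncard : ℤ)

/-- The critical independence difference `d_c(G)`. -/
noncomputable def critIndepDiff (G : SimpleGraph V) : ℤ :=
  sSup {d : ℤ | ∃ T : Set V, IsIndepSet' G T ∧ d = indepDiff G T}

/-- A walk is an induced path if it is a path and no two non-consecutive vertices
of it are adjacent. -/
def IsInducedPath (G : SimpleGraph V) {a b : V} (p : G.Walk a b) : Prop :=
  p.IsPath ∧ ∀ (i j : ℕ) (hi : i < p.support.length) (hj : j < p.support.length),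
    i + 1 < j → ¬ G.Adj (p.support.get ⟨i, hi⟩) (p.support.get ⟨j, hj⟩)

/-- A set is monophonically convex if it contains every vertex of every induced path
joining two of its vertices. -/
def MonoConvex (G : SimpleGraph V) (S : Set V) : Prop :=
  ∀ ⦃a b : V⦄, a ∈ S → b ∈ S → ∀ p : G.Walk a b, IsInducedPath G p →
    ∀ w ∈ p.support, w ∈ S

/-- The monophonic convex hull of `S`: the smallest monophonically convex set containing `S`. -/
def monoHull (G : SimpleGraph V) (S : Set V) : Set V :=
  ⋂₀ {T : Set V | S ⊆ T ∧ MonoConvex G T}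

/-- A set is monophonically convexly independent if no member is in the hull
of the others. -/
def MConvexIndep (G : SimpleGraph V) (S : Set V) : Prop :=
  ∀ v ∈ S, v ∉ monoHull G (S \ {v})

/-- The monophonic rank: the largest size of an m-convexly independent set. -/
noncomputable def monoRank (G : SimpleGraph V) : ℕ :=
  sSup {n : ℕ | ∃ S : Set V, MConvexIndep G S ∧ n = S.ncard}

/-- A starlike partition of a graph: a partition of the vertex set into cliques
`V_0, V_1, …, V_t` such that `V_0` is a maximal clique and, for `i ≥ 1`,
all vertices of `V_i` have the same closed neighborhood outside `V_i`,
contained in `V_0`. -/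
structure IsStarlikePartition (G : SimpleGraph V) (t : ℕ) (Vp : Fin (t+1) → Set V) : Prop where
  nonempty : ∀ i, (Vp i).Nonempty
  disjoint : ∀ i j, i ≠ j → Disjoint (Vp i) (Vp j)
  covers : ∀ v : V, ∃ i, v ∈ Vp i
  cliques : ∀ i, G.IsClique (Vp i)
  maximal : ∀ T : Set V, G.IsClique T → Vp 0 ⊆ T → T ⊆ Vp 0
  nbhd_eq : ∀ i : Fin (t+1), i ≠ 0 → ∀ u ∈ Vp i, ∀ v ∈ Vp i,
    closedNbhd G u \ Vp i = closedNbhd G v \ Vp i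
  nbhd_sub : ∀ i : Fin (t+1), i ≠ 0 → ∀ u ∈ Vp i, closedNbhd G u \ Vp i ⊆ Vp 0

/-- `X_i`: the maximal clique containing `V_i` (`X_0 = V_0`; for `i ≥ 1` it is
the closed neighborhood of any vertex of `V_i`). -/
def Xset (G : SimpleGraph V) {t : ℕ} (Vp : Fin (t+1) → Set V) (i : Fin (t+1)) : Set V :=
  if i = 0 then Vp 0 else ⋃ u ∈ Vp i, closedNbhd G u

/-- `C_i = X_i ∩ Z`. -/
def Cset (G : SimpleGraph V) {t : ℕ} (Vp : Fin (t+1) → Set V) (i : Fin (t+1)) : Set V :=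
  Xset G Vp i ∩ simplicialSet G

/-- `C'_i = X_i − C_i`. -/
def Cset' (G : SimpleGraph V) {t : ℕ} (Vp : Fin (t+1) → Set V) (i : Fin (t+1)) : Set V :=
  Xset G Vp i \ Cset G Vp i

/-- `Y_i`: the union of the sets `C_j`, over `j ≠ i` with `C'_j ⊆ C'_i`. -/
def Yset (G : SimpleGraph V) {t : ℕ} (Vp : Fin (t+1) → Set V) (i : Fin (t+1)) : Set V :=
  ⋃ j ∈ {j : Fin (t+1) | j ≠ i ∧ Cset' G Vp j ⊆ Cset' G Vp i}, Cset G Vp j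

open scoped Classical in
/-- The vertex set of the split graph `G_i`: if `|N(Y_i) − Y_i| = |C'_i| − 1` and
`|Y_i| ≥ |C'_i| − 1` then `(C'_i − {x}) ∪ Y_i` where `{x} = C'_i − N(Y_i)`
(so that `C'_i − {x} = C'_i ∩ N(Y_i)`), otherwise `C'_i ∪ Y_i`. -/
noncomputable def Wset (G : SimpleGraph V) {t : ℕ} (Vp : Fin (t+1) → Set V)
    (i : Fin (t+1)) : Set V :=
  if (((nbhdSet G (Yset G Vp i) \ Yset G Vp i).ncard : ℤ) = ((Cset' G Vp i).ncard : ℤ) - 1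
      ∧ ((Yset G Vp i).ncard : ℤ) ≥ ((Cset' G Vp i).ncard : ℤ) - 1)
  then (Cset' G Vp i ∩ nbhdSet G (Yset G Vp i)) ∪ Yset G Vp i
  else Cset' G Vp i ∪ Yset G Vp i

/-- The induced subgraph on `W` with all edges inside `Y` deleted. -/
def inducedMinusY (G : SimpleGraph V) (W Y : Set V) : SimpleGraph ↥W where
  Adj a b := G.Adj a b ∧ ¬((a : V) ∈ Y ∧ (b : V) ∈ Y)
  symm := by
    constructor
    intro a b h
    exact ⟨h.1.symm, fun hc => h.2 ⟨hc.2, hc.1⟩⟩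
  loopless := by
    constructor
    intro a h
    exact G.irrefl h.1

/-- The split graph `G_i = G[W_i] − E(G[Y_i])`. -/
noncomputable def Gsplit (G : SimpleGraph V) {t : ℕ} (Vp : Fin (t+1) → Set V)
    (i : Fin (t+1)) : SimpleGraph ↥(Wset G Vp i) :=
  inducedMinusY G (Wset G Vp i) (Yset G Vp i)

/-! In a starlike graph every vertex outside `V_0` is simplicial, while an internal vertex `w`
of an induced path is not (its two path neighbours are non-adjacent). Of those two neighbours
at most one lies in the clique `V_0`, so the other one is simplicial and must be an end of the
path. Hence the set of vertices of `⟨S⟩` that lie in `S` or satisfy the conclusion is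
monophonically convex: for an induced path between two of its vertices, each internal vertex
`w ∉ S` has a path neighbour `u ∉ V_0` at an end of the path, so `u ∈ S` as `C'_0 ⊆ V_0`,
and `u, w, u'` with `u'` the other path neighbour is the required induced path. -/

section Hull

variable {G : SimpleGraph V} {S T : Set V}

lemma subset_monoHull (G : SimpleGraph V) (S : Set V) : S ⊆ monoHull G S :=
  fun _ hx => Set.mem_sInter.mpr fun _ hT => hT.1 hx

lemma monoConvex_monoHull (G : SimpleGraph V) (S : Set V) : MonoConvex G (monoHull G S) :=
  fun _ _ ha hb p hp w hw => Set.mem_sInter.mpr fun T hT =>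
    hT.2 (Set.mem_sInter.mp ha T hT) (Set.mem_sInter.mp hb T hT) p hp w hw

lemma monoHull_subset (hST : S ⊆ T) (hT : MonoConvex G T) : monoHull G S ⊆ T :=
  Set.sInter_subset_of_mem ⟨hST, hT⟩

end Hull

def IsInnerOfSimplicialInducedPath (G : SimpleGraph V) (S : Set V) (v : V) : Prop :=
  ∃ (u u' : V) (p : G.Walk u u'), IsInducedPath G p ∧
    v ∈ p.support ∧ v ≠ u ∧ v ≠ u' ∧
    u ∈ S ∧ u ∈ simplicialSet G ∧ u ∈ G.neighborSet v ∧
    u' ∈ monoHull G S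

namespace IsInducedPath

variable {G : SimpleGraph V} {a b w : V} {p : G.Walk a b}

lemma exists_adj_adj_not_adj (hp : IsInducedPath G p) (hw : w ∈ p.support) (hwa : w ≠ a)
    (hwb : w ≠ b) :
    ∃ x y, G.Adj x w ∧ G.Adj w y ∧ ¬ G.Adj x y ∧ x ≠ y ∧ x ∈ p.support ∧ y ∈ p.support := by
  obtain ⟨⟨k, hk⟩, hkw⟩ := List.mem_iff_get.mp hw
  have hlen : 0 < p.support.length := by rw [p.length_support]; omega
  have hk0 : k ≠ 0 := by
    rintro rfl
    exact hwa (hkw.symm.trans (by rw [List.get_mk_zero]; exact p.head_support))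
  have hklast : k ≠ p.support.length - 1 := by
    rintro rfl
    refine hwb (hkw.symm.trans ?_)
    simp
  have hadj : ∀ i (h : i + 1 < p.support.length),
      G.Adj (p.support.get ⟨i, by omega⟩) (p.support.get ⟨i + 1, h⟩) :=
    fun i h => List.isChain_iff_getElem.mp p.isChain_adj_support i h
  have hprev : p.support.get ⟨k - 1 + 1, by omega⟩ = w := by
    rw [← hkw]; congr 1; simp only [Fin.mk.injEq]; omega
  have hxw := hadj (k - 1) (by omega)
  have hwy := hadj k (by omega)
  rw [hprev] at hxw
  rw [hkw] at hwy
  refine ⟨_, _, hxw, hwy, hp.2 (k - 1) (k + 1) (by omega) (by omega) (by omega), fun h => ?_,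
    List.get_mem _ _, List.get_mem _ _⟩
  have := Fin.mk.inj_iff.mp ((hp.1.support_nodup.get_inj_iff).mp h)
  omega

lemma not_isSimplicial (hp : IsInducedPath G p) (hw : w ∈ p.support) (hwa : w ≠ a)
    (hwb : w ≠ b) : ¬ IsSimplicial G w := by
  obtain ⟨x, y, hxw, hwy, hxy, hne, -, -⟩ := hp.exists_adj_adj_not_adj hw hwa hwb
  exact fun hs => hxy (hs x (Or.inr hxw.symm) y (Or.inr hwy) hne)

lemma eq_or_eq_of_isSimplicial (hp : IsInducedPath G p) (hw : w ∈ p.support)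
    (hs : IsSimplicial G w) : w = a ∨ w = b := by
  by_contra! h
  exact hp.not_isSimplicial hw h.1 h.2 hs

end IsInducedPath

lemma isInducedPath_cons_cons {G : SimpleGraph V} {u w u' : V} (huw : G.Adj u w)
    (hwu' : G.Adj w u') (huu' : ¬ G.Adj u u') (hne : u ≠ u') :
    IsInducedPath G (Walk.cons huw (Walk.cons hwu' Walk.nil)) := by
  refine ⟨by simp [Walk.isPath_def, huw.ne, hwu'.ne, hne], fun i j hi hj hij => ?_⟩
  simp only [Walk.support_cons, Walk.support_nil, List.length_cons, List.length_nil] at hi hj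
  obtain ⟨rfl, rfl⟩ : i = 0 ∧ j = 2 := by omega
  exact huu'

lemma mem_Cset'_zero_iff {G : SimpleGraph V} {t : ℕ} {Vp : Fin (t+1) → Set V} {w : V} :
    w ∈ Cset' G Vp 0 ↔ w ∈ Vp 0 ∧ ¬ IsSimplicial G w := by
  simp [Cset', Cset, Xset, simplicialSet]

namespace IsStarlikePartition

variable {G : SimpleGraph V} {t : ℕ} {Vp : Fin (t+1) → Set V}

lemma isSimplicial_of_notMem (hstar : IsStarlikePartition G t Vp) {v : V} (hv : v ∉ Vp 0) :
    IsSimplicial G v := by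
  obtain ⟨i, hvi⟩ := hstar.covers v
  have hi : i ≠ 0 := by rintro rfl; exact hv hvi
  have hout : ∀ a ∈ closedNbhd G v, a ∉ Vp i → a ∈ Vp 0 := fun a ha hai =>
    hstar.nbhd_sub i hi v hvi ⟨ha, hai⟩
  have hnbr : ∀ a ∈ Vp i, ∀ b ∈ closedNbhd G v, b ∉ Vp i → a ≠ b → G.Adj a b := by
    intro a hai b hb hbi hab
    have hb' : b ∈ closedNbhd G a := by
      rw [← Set.sdiff_union_inter (closedNbhd G a) (Vp i), ← hstar.nbhd_eq i hi v hvi a hai]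
      exact Or.inl ⟨hb, hbi⟩
    exact (Set.mem_insert_iff.mp hb').resolve_left (Ne.symm hab)
  intro a ha b hb hab
  by_cases hai : a ∈ Vp i <;> by_cases hbi : b ∈ Vp i
  · exact hstar.cliques i hai hbi hab
  · exact hnbr a hai b hb hbi hab
  · exact (hnbr b hbi a ha hai hab.symm).symm
  · exact hstar.cliques 0 (hout a ha hai) (hout b hb hbi) hab

lemma exists_adj_adj_not_adj_notMem (hstar : IsStarlikePartition G t Vp) {a b w : V}
    {p : G.Walk a b} (hp : IsInducedPath G p) (hw : w ∈ p.support) (hwa : w ≠ a)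
    (hwb : w ≠ b) :
    ∃ x y, G.Adj x w ∧ G.Adj w y ∧ ¬ G.Adj x y ∧ x ≠ y ∧ x ∈ p.support ∧ y ∈ p.support ∧
      x ∉ Vp 0 := by
  obtain ⟨x, y, hxw, hwy, hxy, hne, hx, hy⟩ := hp.exists_adj_adj_not_adj hw hwa hwb
  by_cases hx0 : x ∈ Vp 0
  · have hy0 : y ∉ Vp 0 := fun hy0 => hxy (hstar.cliques 0 hx0 hy0 hne)
    exact ⟨y, x, hwy.symm, hxw.symm, fun h => hxy h.symm, hne.symm, hy, hx, hy0⟩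
  · exact ⟨x, y, hxw, hwy, hxy, hne, hx, hy, hx0⟩

lemma mem_Cset'_zero_of_mem_support (hstar : IsStarlikePartition G t Vp) {a b w : V}
    {p : G.Walk a b} (hp : IsInducedPath G p) (hw : w ∈ p.support) (hwa : w ≠ a)
    (hwb : w ≠ b) : w ∈ Cset' G Vp 0 := by
  have hns := hp.not_isSimplicial hw hwa hwb
  exact mem_Cset'_zero_iff.mpr ⟨by_contra fun h => hns (hstar.isSimplicial_of_notMem h), hns⟩

lemma monoConvex_union_inter_monoHull (hstar : IsStarlikePartition G t Vp) (S : Set V) :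
    MonoConvex G
      ((S ∪ {w | w ∈ Cset' G Vp 0 ∧ IsInnerOfSimplicialInducedPath G S w}) ∩ monoHull G S) := by
  intro a b ha hb p hp w hw
  have hHull := monoConvex_monoHull G S ha.2 hb.2 p hp
  refine ⟨?_, hHull w hw⟩
  by_cases hwS : w ∈ S
  · exact Or.inl hwS
  by_cases hwa : w = a
  · exact hwa ▸ ha.1
  by_cases hwb : w = b
  · exact hwb ▸ hb.1
  obtain ⟨x, y, hxw, hwy, hxy, hne, hx, hy, hx0⟩ :=
    hstar.exists_adj_adj_not_adj_notMem hp hw hwa hwb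
  have hxs := hstar.isSimplicial_of_notMem hx0
  have hxS : x ∈ S := by
    have hxa : x ∈ S ∪ {w | w ∈ Cset' G Vp 0 ∧ IsInnerOfSimplicialInducedPath G S w} := by
      rcases hp.eq_or_eq_of_isSimplicial hx hxs with rfl | rfl
      exacts [ha.1, hb.1]
    exact hxa.resolve_right fun h => hx0 (mem_Cset'_zero_iff.mp h.1).1
  exact Or.inr ⟨hstar.mem_Cset'_zero_of_mem_support hp hw hwa hwb, x, y, _,
    isInducedPath_cons_cons hxw hwy hxy hne, by simp, hxw.ne', hwy.ne, hxS, hxs, hxw.symm,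
    hHull y hy⟩

end IsStarlikePartition

theorem statement0_general (G : SimpleGraph V) (t : ℕ) (Vp : Fin (t+1) → Set V)
    (hstar : IsStarlikePartition G t Vp) (S : Set V)
    (v : V) (hv : v ∈ monoHull G S \ S) :
    v ∈ Cset' G Vp 0 ∧
      ∃ (u u' : V) (p : G.Walk u u'), IsInducedPath G p ∧
        v ∈ p.support ∧ v ≠ u ∧ v ≠ u' ∧
        u ∈ S ∧ u ∈ simplicialSet G ∧ u ∈ G.neighborSet v ∧
        u' ∈ monoHull G S := by
  have hHull := monoHull_subset (hT := hstar.monoConvex_union_inter_monoHull S)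
    (Set.subset_inter Set.subset_union_left (subset_monoHull G S))
  exact (hHull hv.1).1.resolve_left hv.2

/-- Lemma 1: in a starlike graph, every vertex `v ∈ ⟨S⟩ − S`
belongs to `C'_0` and is an internal vertex of an induced `(u,u')`-path with
`u ∈ S ∩ Z ∩ N(v)` and `u' ∈ ⟨S⟩`. -/
theorem statement0 [Fintype V] (G : SimpleGraph V) (t : ℕ) (Vp : Fin (t+1) → Set V)
    (hstar : IsStarlikePartition G t Vp) (S : Set V)
    (v : V) (hv : v ∈ monoHull G S \ S) :
    v ∈ Cset' G Vp 0 ∧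
      ∃ (u u' : V) (p : G.Walk u u'), IsInducedPath G p ∧
        v ∈ p.support ∧ v ≠ u ∧ v ≠ u' ∧
        u ∈ S ∧ u ∈ simplicialSet G ∧ u ∈ G.neighborSet v ∧
        u' ∈ monoHull G S :=
  statement0_general G t Vp hstar S v hv
end

section
/- Let G be a starlike graph with clique partition (V_0, V_1, …, V_t) and let S be an m-convexly independent set of G. If there are edges u·v and u'·v' of G with u, u' ∈ S ∩ C'_0, v ∈ S ∩ C_i and v' ∈ S ∩ C_j for some i, j ∈ {0, 1, …, t}, then i = j. -/
open SimpleGraph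

variable {V : Type*}

/-
If `i ≠ j`, the simplicial vertices `v ∈ C_i` and `v' ∈ C_j` are distinct and non-adjacent, since a
simplicial vertex of `X_i` lies in `V_i` and its closed neighbourhood is the clique `X_i`. The
vertices `u, u'` of `C'_0` are not simplicial, hence differ from `v, v'`, and lie in the clique `V_0`.
So one of `v - u - v'`, `v - u' - v'`, `v - u - u' - v'` is an induced path, and its interior vertex
`u` or `u'` lies in the monophonic hull of the rest of `S`.
-/

lemma self_mem_closedNbhd (G : SimpleGraph V) (v : V) : v ∈ closedNbhd G v :=
  Set.mem_insert _ _

lemma mem_closedNbhd_of_adj {G : SimpleGraph V} {v w : V} (h : G.Adj v w) :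
    w ∈ closedNbhd G v :=
  Set.mem_insert_of_mem _ h

section Starlike

variable {G : SimpleGraph V} {t : ℕ} {Vp : Fin (t+1) → Set V}

@[simp]
lemma Xset_zero : Xset G Vp 0 = Vp 0 := if_pos rfl

lemma Xset_of_ne_zero {i : Fin (t+1)} (hi : i ≠ 0) :
    Xset G Vp i = ⋃ u ∈ Vp i, closedNbhd G u :=
  if_neg hi

lemma not_isSimplicial_of_mem_Cset' {i : Fin (t+1)} {u : V} (hu : u ∈ Cset' G Vp i) :
    ¬ IsSimplicial G u :=
  fun hsimp => hu.2 ⟨hu.1, hsimp⟩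

namespace IsStarlikePartition

variable (hstar : IsStarlikePartition G t Vp)
include hstar

/-- `V_0 ∪ {w}` is a clique, so maximality of `V_0` puts `w` in `V_0`. -/
lemma mem_zero_of_adj_of_isSimplicial {v w : V} (hv : v ∈ Vp 0) (hsimp : IsSimplicial G v)
    (hvw : G.Adj v w) : w ∈ Vp 0 := by
  have hsub : insert w (Vp 0) ⊆ closedNbhd G v := by
    rintro x (rfl | hx)
    · exact mem_closedNbhd_of_adj hvw
    · by_cases hxv : x = v
      · exact hxv ▸ self_mem_closedNbhd G v
      · exact mem_closedNbhd_of_adj (hstar.cliques 0 hv hx (Ne.symm hxv))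
  have hclique : G.IsClique (insert w (Vp 0)) :=
    fun a ha b hb hab => hsimp a (hsub ha) b (hsub hb) hab
  exact hstar.maximal _ hclique (Set.subset_insert _ _) (Set.mem_insert _ _)

lemma mem_of_mem_Cset {i : Fin (t+1)} {v : V} (hv : v ∈ Cset G Vp i) : v ∈ Vp i := by
  obtain ⟨hvX, hsimp⟩ := hv
  by_cases hi : i = 0
  · subst hi
    simpa using hvX
  rw [Xset_of_ne_zero hi, Set.mem_iUnion₂] at hvX
  obtain ⟨w, hw, hvw⟩ := hvX
  rcases Set.mem_insert_iff.mp hvw with rfl | hwv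
  · exact hw
  obtain ⟨k, hvk⟩ := hstar.covers v
  by_contra hvi
  have hki : k ≠ i := fun h => hvi (h ▸ hvk)
  have hw0 : w ∈ Vp 0 := by
    by_cases hk : k = 0
    · subst hk
      exact hstar.mem_zero_of_adj_of_isSimplicial hvk hsimp hwv.symm
    · exact hstar.nbhd_sub k hk v hvk
        ⟨mem_closedNbhd_of_adj hwv.symm,
          Set.disjoint_left.mp (hstar.disjoint i k hki.symm) hw⟩
  exact Set.disjoint_left.mp (hstar.disjoint i 0 hi) hw hw0

lemma eq_of_mem_Cset {i j : Fin (t+1)} {v : V} (hi : v ∈ Cset G Vp i)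
    (hj : v ∈ Cset G Vp j) : i = j := by
  by_contra hij
  exact Set.disjoint_left.mp (hstar.disjoint i j hij)
    (hstar.mem_of_mem_Cset hi) (hstar.mem_of_mem_Cset hj)

lemma closedNbhd_subset_Xset {i : Fin (t+1)} {v : V} (hv : v ∈ Cset G Vp i) :
    closedNbhd G v ⊆ Xset G Vp i := by
  have hvi := hstar.mem_of_mem_Cset hv
  by_cases hi : i = 0
  · subst hi
    rintro w (rfl | hvw)
    · simpa using hvi
    · simpa using hstar.mem_zero_of_adj_of_isSimplicial hvi hv.2 hvw
  · rw [Xset_of_ne_zero hi]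
    exact Set.subset_biUnion_of_mem hvi

lemma not_adj_of_mem_Cset {i j : Fin (t+1)} (hij : i ≠ j) {v v' : V}
    (hv : v ∈ Cset G Vp i) (hv' : v' ∈ Cset G Vp j) : ¬ G.Adj v v' := fun hvv' =>
  hij (hstar.eq_of_mem_Cset ⟨hstar.closedNbhd_subset_Xset hv (mem_closedNbhd_of_adj hvv'), hv'.2⟩ hv')

end IsStarlikePartition

end Starlike

section Monophonic

variable {G : SimpleGraph V}

lemma mem_monoHull_of_isInducedPath {S : Set V} {a b x : V} (ha : a ∈ S) (hb : b ∈ S)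
    {p : G.Walk a b} (hp : IsInducedPath G p) (hx : x ∈ p.support) : x ∈ monoHull G S :=
  Set.mem_sInter.mpr fun _T hT => hT.2 (hT.1 ha) (hT.1 hb) p hp x hx

lemma MConvexIndep.not_mem_support_of_isInducedPath {S : Set V} (hS : MConvexIndep G S)
    {a b x : V} (hx : x ∈ S) (ha : a ∈ S) (hb : b ∈ S) (hxa : x ≠ a) (hxb : x ≠ b)
    {p : G.Walk a b} (hp : IsInducedPath G p) : x ∉ p.support := fun hxp =>
  hS x hx (mem_monoHull_of_isInducedPath ⟨ha, Ne.symm hxa⟩ ⟨hb, Ne.symm hxb⟩ hp hxp)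

lemma isInducedPath_cons_cons_nil {a b c : V} (hab : G.Adj a b) (hbc : G.Adj b c)
    (hac : ¬ G.Adj a c) (hne : a ≠ c) :
    IsInducedPath G (.cons hab (.cons hbc .nil)) := by
  refine ⟨by simp [Walk.isPath_def, hab.ne, hbc.ne, hne], fun i j hi hj hij => ?_⟩
  simp only [Walk.support_cons, Walk.support_nil, List.length_cons, List.length_nil] at hi hj
  obtain ⟨rfl, rfl⟩ : i = 0 ∧ j = 2 := by omega
  simpa using hac

lemma isInducedPath_cons_cons_cons_nil {a b c d : V} (hab : G.Adj a b) (hbc : G.Adj b c)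
    (hcd : G.Adj c d) (hac : ¬ G.Adj a c) (had : ¬ G.Adj a d) (hbd : ¬ G.Adj b d)
    (hac' : a ≠ c) (had' : a ≠ d) (hbd' : b ≠ d) :
    IsInducedPath G (.cons hab (.cons hbc (.cons hcd .nil))) := by
  refine ⟨by simp [Walk.isPath_def, hab.ne, hbc.ne, hcd.ne, hac', had', hbd'],
    fun i j hi hj hij => ?_⟩
  simp only [Walk.support_cons, Walk.support_nil, List.length_cons, List.length_nil] at hi hj
  obtain ⟨rfl, rfl⟩ | ⟨rfl, rfl⟩ | ⟨rfl, rfl⟩ :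
      (i = 0 ∧ j = 2) ∨ (i = 0 ∧ j = 3) ∨ (i = 1 ∧ j = 3) := by omega
  · simpa using hac
  · simpa using had
  · simpa using hbd

end Monophonic

theorem statement10_general (G : SimpleGraph V) (t : ℕ) (Vp : Fin (t+1) → Set V)
    (hstar : IsStarlikePartition G t Vp) (S : Set V) (hS : MConvexIndep G S)
    (i j : Fin (t+1)) (u u' v v' : V)
    (hu : u ∈ S ∩ Cset' G Vp 0) (hu' : u' ∈ S ∩ Cset' G Vp 0)
    (hv : v ∈ S ∩ Cset G Vp i) (hv' : v' ∈ S ∩ Cset G Vp j)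
    (huv : G.Adj u v) (hu'v' : G.Adj u' v') :
    i = j := by
  by_contra hij
  have hvv' : ¬ G.Adj v v' := hstar.not_adj_of_mem_Cset hij hv.2 hv'.2
  have hne : v ≠ v' := fun h => hij (hstar.eq_of_mem_Cset hv.2 (h ▸ hv'.2))
  have hne_simp {x y : V} (hx : x ∈ S ∩ Cset' G Vp 0) (hy : y ∈ simplicialSet G) : x ≠ y :=
    fun h => not_isSimplicial_of_mem_Cset' hx.2 (h ▸ hy)
  by_cases h1 : G.Adj u v'
  · exact hS.not_mem_support_of_isInducedPath hu.1 hv.1 hv'.1 (hne_simp hu hv.2.2)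
      (hne_simp hu hv'.2.2) (isInducedPath_cons_cons_nil huv.symm h1 hvv' hne) (by simp)
  by_cases h2 : G.Adj u' v
  · exact hS.not_mem_support_of_isInducedPath hu'.1 hv.1 hv'.1 (hne_simp hu' hv.2.2)
      (hne_simp hu' hv'.2.2) (isInducedPath_cons_cons_nil h2.symm hu'v' hvv' hne) (by simp)
  have huu' : G.Adj u u' := hstar.cliques 0 (by simpa using hu.2.1) (by simpa using hu'.2.1)
    (by rintro rfl; exact h2 huv)
  exact hS.not_mem_support_of_isInducedPath hu.1 hv.1 hv'.1 (hne_simp hu hv.2.2)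
    (hne_simp hu hv'.2.2)
    (isInducedPath_cons_cons_cons_nil huv.symm huu' hu'v' (fun h => h2 h.symm) hvv' h1
      (hne_simp hu' hv.2.2).symm hne (hne_simp hu hv'.2.2)) (by simp)

/-- if `S` is m-convexly independent in a starlike graph and there are
edges `u·v` and `u'·v'` with `u, u' ∈ S ∩ C'_0`, `v ∈ S ∩ C_i`, `v' ∈ S ∩ C_j`,
then `i = j`. -/
theorem statement10 [Fintype V] (G : SimpleGraph V) (t : ℕ) (Vp : Fin (t+1) → Set V)
    (hstar : IsStarlikePartition G t Vp) (S : Set V) (hS : MConvexIndep G S)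
    (i j : Fin (t+1)) (u u' v v' : V)
    (hu : u ∈ S ∩ Cset' G Vp 0) (hu' : u' ∈ S ∩ Cset' G Vp 0)
    (hv : v ∈ S ∩ Cset G Vp i) (hv' : v' ∈ S ∩ Cset G Vp j)
    (huv : G.Adj u v) (hu'v' : G.Adj u' v') :
    i = j :=
  statement10_general G t Vp hstar S hS i j u u' v v' hu hu' hv hv' huv hu'v'
end
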